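/- Let t ≥ 1 be odd. Any binary string of length ((t+3)/2)² − 2 contains a usable zero-run, i.e., writing it as η₁ 1 η₂ 1 ⋯ 1 η_c, there exists a zero-run η_j with positive length γ_j such that α_j + β_j + γ_j ≥ t, OR the string contains at least t non-overlapping 11 substrings. Here α_j and β_j count non-overlapping 11 substrings plus remaining ones strictly before and after the block 1η_j1 respectively (with α₁ = 0, β_c = 0). -/

import Mathlib

/-- Greedy count of non-overlapping `11` substrings plus remaining single ones. -/
def onesCount : List Bool → ℕ
  | [] => 0
  | false :: l => onesCount l
  | [true] => 1
  | true :: _ :: l => 1 + onesCount l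

/-- Greedy count of non-overlapping `11` substrings. -/
def elevenCount : List Bool → ℕ
  | [] => 0
  | [_] => 0
  | true :: true :: l => 1 + elevenCount l
  | _ :: b :: l => elevenCount (b :: l)

/-- The string contains a usable zero-run: a zero-run of positive length `γ` with
`α + β + γ ≥ t`, where `α`, `β` count non-overlapping `11` substrings plus remaining
ones strictly before and after the block `1 0^γ 1` (boundary conventions included). -/
def ExistsUsableRun (t : ℕ) (L : List Bool) : Prop :=
  (∃ A B γ, 0 < γ ∧ L = A ++ [true] ++ List.replicate γ false ++ [true] ++ B ∧
      t ≤ onesCount A + onesCount B + γ) ∨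
  (∃ B γ, 0 < γ ∧ L = List.replicate γ false ++ [true] ++ B ∧ t ≤ onesCount B + γ) ∨
  (∃ A γ, 0 < γ ∧ L = A ++ [true] ++ List.replicate γ false ∧ t ≤ onesCount A + γ) ∨
  (∃ γ, 0 < γ ∧ L = List.replicate γ false ∧ t ≤ γ)

/-! Write the string as `0^g₀ 1^a₁ 0^g₁ ⋯ 1^a_c 0^g_c`, so that its weight `U = onesCount` is
`∑ ⌈aᵢ/2⌉`. Cutting out the two ones that bound a zero-run lowers the weight by the parities
of the neighbouring blocks; hence, if no zero-run is usable, each `gⱼ` is at most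
`t - 1 - U` plus those parities, and in particular `U ≤ t`. Adding these bounds block by block
gives `length + 1 ≤ 2U + (U + 1)(t - U)` as soon as the string contains a zero. The right-hand side
is a concave quadratic in `U` whose maximum, at `U = (t + 1) / 2`, is `((t + 3) / 2)² - 2` for odd
`t`. A string of ones alone has at most `2t - 1` letters unless it contains `t` disjoint `11`s. -/

open List

theorem onesCount_append (X : List Bool) {Y : List Bool} (hY : Y.head? ≠ some true) :
    onesCount (X ++ Y) = onesCount X + onesCount Y := by
  induction X using onesCount.induct with
  | case1 => simp [onesCount]
  | case2 l ih => simpa [onesCount] using ih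
  | case3 =>
    match Y, hY with
    | [], _ => rfl
    | false :: Y, _ => simp [onesCount]
  | case4 x l ih => simp only [cons_append, onesCount, ih]; omega

theorem onesCount_replicate_false_append (n : ℕ) (X : List Bool) :
    onesCount (replicate n false ++ X) = onesCount X := by
  induction n with
  | zero => rfl
  | succ n ih => simpa [replicate_succ, onesCount] using ih

theorem onesCount_replicate_true : ∀ n, onesCount (replicate n true) = (n + 1) / 2
  | 0 => rfl
  | 1 => rfl
  | n + 2 => by simp [replicate_succ, onesCount, onesCount_replicate_true n]; omega

theorem elevenCount_replicate_true : ∀ n, elevenCount (replicate n true) = n / 2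
  | 0 => rfl
  | 1 => rfl
  | n + 2 => by simp [replicate_succ, elevenCount, elevenCount_replicate_true n]; omega

theorem onesCount_replicate_true_append (n : ℕ) {Y : List Bool} (hY : Y.head? ≠ some true) :
    onesCount (replicate n true ++ Y) = (n + 1) / 2 + onesCount Y := by
  rw [onesCount_append _ hY, onesCount_replicate_true]

theorem onesCount_concat_le (l : List Bool) (x : Bool) :
    onesCount (l ++ [x]) ≤ onesCount l + 1 := by
  induction l using onesCount.induct with
  | case1 => cases x <;> simp [onesCount]
  | case2 l ih => simpa [onesCount] using ih
  | case3 => simp [onesCount]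
  | case4 y l ih => simp only [cons_append, onesCount]; omega

theorem onesCount_le_onesCount_dropLast_add_one (l : List Bool) :
    onesCount l ≤ onesCount l.dropLast + 1 := by
  rcases eq_nil_or_concat' l with rfl | ⟨l, x, rfl⟩
  · simp [onesCount]
  · simpa using onesCount_concat_le l x

theorem exists_eq_replicate_append (b : Bool) (l : List Bool) :
    ∃ n r, l = replicate n b ++ r ∧ r.head? ≠ some b := by
  induction l with
  | nil => exact ⟨0, [], rfl, by simp⟩
  | cons x l ih =>
    by_cases hx : x = b
    · obtain ⟨n, r, rfl, hr⟩ := ih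
      exact ⟨n + 1, r, by simp [replicate_succ, hx], hr⟩
    · exact ⟨0, x :: l, rfl, by simpa using hx⟩

theorem exists_eq_block_append {R : List Bool} (hR : R.head? = some false) :
    ∃ γ a R₁, 0 < γ ∧ R = replicate γ false ++ replicate a true ++ R₁ ∧
      R₁.head? ≠ some true ∧ (a = 0 → R₁ = []) := by
  obtain ⟨γ, R', rfl, hR'⟩ := exists_eq_replicate_append false R
  obtain ⟨a, R₁, rfl, hR₁⟩ := exists_eq_replicate_append true R'
  refine ⟨γ, a, R₁, Nat.pos_of_ne_zero ?_, by simp, hR₁, ?_⟩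
  · rintro rfl
    exact hR' (by simpa using hR)
  · rintro rfl
    match R₁, hR₁, hR' with
    | [], _, _ => rfl
    | b :: _, h₁, h₂ => cases b <;> simp_all

theorem onesCount_append_block {γ : ℕ} (P : List Bool) (a : ℕ) (hγ : 0 < γ) :
    onesCount (P ++ (replicate γ false ++ replicate a true)) = onesCount P + (a + 1) / 2 := by
  obtain ⟨γ, rfl⟩ := Nat.exists_eq_add_one_of_ne_zero hγ.ne'
  rw [onesCount_append _ (by simp [replicate_succ]), onesCount_replicate_false_append,
    onesCount_replicate_true]

/-- The left-hand side is `α + γ + β` for the zero-run `0^γ`: the block `1 0^γ 1` takes the last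
one of `P` and the first one of `1^a`, which leaves `onesCount (1^(a-1)) = a / 2`. -/
theorem run_weight_lt_of_not_existsUsableRun {t γ a : ℕ} {P R₁ : List Bool}
    (hP : P.getLast? ≠ some false) (hγ : 0 < γ)
    (hR₁ : R₁.head? ≠ some true) (ha : a = 0 → R₁ = [])
    (h : ¬ExistsUsableRun t (P ++ (replicate γ false ++ replicate a true ++ R₁))) :
    onesCount P.dropLast + γ + a / 2 + onesCount R₁ < t := by
  by_contra! hle
  apply h
  rcases eq_nil_or_concat' P with rfl | ⟨A, x, rfl⟩
  · simp only [dropLast_nil, onesCount, zero_add] at hle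
    rcases a with _ | m
    · simp only [ha rfl, onesCount, add_zero] at hle ⊢
      exact .inr <| .inr <| .inr ⟨γ, hγ, by simp, by omega⟩
    · refine .inr <| .inl ⟨replicate m true ++ R₁, γ, hγ, by simp [replicate_succ], ?_⟩
      rw [onesCount_replicate_true_append _ hR₁]
      omega
  · obtain rfl : x = true := by cases x <;> simp_all
    rw [dropLast_concat] at hle
    rcases a with _ | m
    · simp only [ha rfl, onesCount, add_zero] at hle ⊢
      exact .inr <| .inr <| .inl ⟨A, γ, hγ, by simp, by omega⟩
    · refine .inl ⟨A, replicate m true ++ R₁, γ, hγ, by simp [replicate_succ], ?_⟩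
      rw [onesCount_replicate_true_append _ hR₁]
      omega

theorem onesCount_le_of_not_existsUsableRun {t : ℕ} {P R : List Bool}
    (hP : P.getLast? ≠ some false) (hR : R.head? = some false) (h : ¬ExistsUsableRun t (P ++ R)) :
    onesCount (P ++ R) ≤ t := by
  obtain ⟨γ, a, R₁, hγ, rfl, hR₁, ha⟩ := exists_eq_block_append hR
  have hrun := run_weight_lt_of_not_existsUsableRun hP hγ hR₁ ha h
  have hdrop := onesCount_le_onesCount_dropLast_add_one P
  rw [← append_assoc, onesCount_append _ hR₁, onesCount_append_block P a hγ]
  omega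

/-- `P` is the part of the string already read, empty or ending with a one; `onesCount P.dropLast`
is the count `α` in front of the first zero-run of `R`. -/
theorem length_add_le_of_not_existsUsableRun {t : ℕ} {P R : List Bool}
    (hP : P.getLast? ≠ some false) (hR : R.head? = some false) (h : ¬ExistsUsableRun t (P ++ R)) :
    (R.length : ℤ) + 1 + onesCount P.dropLast ≤
      2 * onesCount R + onesCount P + (onesCount R + 1) * (t - onesCount (P ++ R)) := by
  induction hn : R.length using Nat.strong_induction_on generalizing P R with | _ n ih =>
  subst hn
  have hU := onesCount_le_of_not_existsUsableRun hP hR h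
  obtain ⟨γ, a, R₁, hγ, rfl, hR₁, ha⟩ := exists_eq_block_append hR
  have hrun := run_weight_lt_of_not_existsUsableRun hP hγ hR₁ ha h
  have hdrop := onesCount_le_onesCount_dropLast_add_one P
  have hcountR :
      onesCount (replicate γ false ++ replicate a true ++ R₁) = (a + 1) / 2 + onesCount R₁ := by
    rw [onesCount_append _ hR₁]
    simpa [onesCount] using onesCount_append_block [] a hγ
  rw [hcountR, length_append, length_append, length_replicate, length_replicate, ← append_assoc,
    onesCount_append _ hR₁, onesCount_append_block P a hγ]
  rw [← append_assoc, onesCount_append _ hR₁, onesCount_append_block P a hγ] at hU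
  have hC : (a + 1) / 2 + a / 2 = a := by omega
  rcases R₁ with _ | ⟨_ | _, R₂⟩
  · simp only [onesCount, length_nil, add_zero] at hU hrun ⊢
    generalize (a + 1) / 2 = C, a / 2 = d at *
    push_cast at *
    zify at hU hrun hC hdrop
    nlinarith [mul_nonneg (Int.natCast_nonneg C) (sub_nonneg.2 hU)]
  · have ha : a ≠ 0 := fun h0 => nomatch ha h0
    have hrest := ih _ (by simp; omega) (P := P ++ (replicate γ false ++ replicate a true))
      (R := false :: R₂) (by simp [getLast?_replicate, ha]) rfl (by rwa [append_assoc]) rfl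
    rw [dropLast_append_of_ne_nil (by simp [ha]), dropLast_append_of_ne_nil (by simp [ha]),
      dropLast_replicate, onesCount_append_block P (a - 1) hγ, onesCount_append _ hR₁,
      onesCount_append_block P a hγ, Nat.sub_add_cancel (Nat.pos_of_ne_zero ha)] at hrest
    have hC1 : 1 ≤ (a + 1) / 2 := by omega
    have hC2 : (a + 1) / 2 ≤ a / 2 + 1 := by omega
    generalize (a + 1) / 2 = C, a / 2 = d, onesCount (false :: R₂) = u at *
    push_cast at *
    zify at hU hrun hC hdrop hC1 hC2
    nlinarith [mul_nonneg (sub_nonneg.2 hC1) (sub_nonneg.2 hU)]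
  · simp at hR₁

theorem four_mul_length_add_two_lt {t : ℕ} {L : List Bool} (h : ¬ExistsUsableRun t L)
    (hE : elevenCount L < t) : 4 * (L.length + 2) < (t + 3) ^ 2 := by
  obtain ⟨a, L₁, rfl, hL₁⟩ := exists_eq_replicate_append true L
  rcases L₁ with _ | ⟨_ | _, L₂⟩
  · rw [append_nil, elevenCount_replicate_true] at hE
    rw [append_nil, length_replicate]
    have ha : a + 1 ≤ 2 * t := by omega
    nlinarith [sq_nonneg ((t : ℤ) - 1)]
  · have hP : (replicate a true).getLast? ≠ some false := by simp [getLast?_replicate]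
    have hlen := length_add_le_of_not_existsUsableRun hP rfl h
    have hV := onesCount_le_of_not_existsUsableRun hP rfl h
    rw [onesCount_append _ hL₁, onesCount_replicate_true] at hlen hV
    rw [dropLast_replicate, onesCount_replicate_true] at hlen
    have hC : (a - 1 + 1) / 2 + (a + 1) / 2 = a := by omega
    rw [length_append, length_replicate]
    generalize (a - 1 + 1) / 2 = d, (a + 1) / 2 = C, onesCount (false :: L₂) = u,
      (false :: L₂).length = n at *
    push_cast at *
    zify at hV hC
    nlinarith [mul_nonneg (Int.natCast_nonneg C) (sub_nonneg.2 hV),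
      sq_nonneg (2 * ((C : ℤ) + u) - t - 1)]
  · simp at hL₁

theorem strong_decoder_stops_odd_general (t : ℕ) (hodd : Odd t) (L : List Bool)
    (hlen : L.length = ((t + 3) / 2) ^ 2 - 2) :
    ExistsUsableRun t L ∨ t ≤ elevenCount L := by
  by_contra h
  rw [not_or, not_le] at h
  have hbound := four_mul_length_add_two_lt h.1 h.2
  obtain ⟨k, rfl⟩ := hodd
  rw [show (2 * k + 1 + 3) / 2 = k + 2 by omega] at hlen
  have hk : 2 ≤ (k + 2) ^ 2 := by nlinarith
  rw [hlen, Nat.sub_add_cancel hk] at hbound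
  nlinarith

/-- Stopping guarantee of the adaptive strong decoder for odd `t`: any binary string of
length `((t+3)/2)² − 2` contains a usable zero-run or at least `t` non-overlapping `11`
substrings. -/
theorem strong_decoder_stops_odd (t : ℕ) (ht : 1 ≤ t) (hodd : Odd t) (L : List Bool)
    (hlen : L.length = ((t + 3) / 2) ^ 2 - 2) :
    ExistsUsableRun t L ∨ t ≤ elevenCount L :=
  strong_decoder_stops_odd_general t hodd L hlen
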